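/- arXiv:0905.1763 — 2 statements merged into one kernel-verified Lean document; each statement's English description precedes it below -/
import Mathlib

section
/- If G is a connected triangle-free graph with more than one vertex, then k(G) = |E(G)| - |V(G)| + 2. -/
open SimpleGraph

/-- The competition graph of a digraph `D` (given as a relation): distinct vertices
`x`, `y` are adjacent iff they have a common out-neighbor in `D`. -/
def CompetitionGraph {V : Type*} (D : V → V → Prop) : SimpleGraph V where
  Adj x y := x ≠ y ∧ ∃ v, D x v ∧ D y v
  symm := ⟨by rintro x y ⟨h, v, hx, hy⟩; exact ⟨h.symm, v, hy, hx⟩⟩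
  loopless := ⟨by rintro x ⟨h, -⟩; exact h rfl⟩

/-- A digraph is acyclic iff it has no directed cycle, i.e. no vertex reaches itself
by a nonempty directed walk. -/
def DigraphAcyclic {V : Type*} (D : V → V → Prop) : Prop :=
  ∀ v, ¬ Relation.TransGen D v v

/-- The graph `G` together with `k` additional isolated vertices. -/
def addIsolated {V : Type*} (G : SimpleGraph V) (k : ℕ) : SimpleGraph (V ⊕ Fin k) where
  Adj a b := ∃ x y, a = Sum.inl x ∧ b = Sum.inl y ∧ G.Adj x y
  symm := ⟨by rintro a b ⟨x, y, rfl, rfl, h⟩; exact ⟨y, x, rfl, rfl, h.symm⟩⟩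
  loopless := ⟨by
    rintro a ⟨x, y, rfl, hy, h⟩
    obtain rfl := Sum.inl_injective hy
    exact G.ne_of_adj h rfl⟩

/-- `G` plus `k` isolated vertices is the competition graph of some acyclic digraph. -/
def IsCompetitionWitness {V : Type*} (G : SimpleGraph V) (k : ℕ) : Prop :=
  ∃ D : (V ⊕ Fin k) → (V ⊕ Fin k) → Prop,
    DigraphAcyclic D ∧ CompetitionGraph D = addIsolated G k

/-- The competition number of `G`: the least `k` such that `G` plus `k` isolated
vertices is the competition graph of an acyclic digraph. -/
noncomputable def compNum {V : Type*} (G : SimpleGraph V) : ℕ :=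
  sInf {k | IsCompetitionWitness G k}

/-- The generalized edge clique cover number `θ_E(F; H)`: the minimum number of cliques
of `G` contained in the vertex set `H` (i.e. cliques of the induced subgraph on `H`)
needed so that every edge in `F` has both endpoints in some clique of the family. -/
noncomputable def thetaEOn {V : Type*} (G : SimpleGraph V) (F : Set (Sym2 V)) (H : Set V) : ℕ :=
  sInf {n | ∃ f : Fin n → Set V,
    (∀ i, f i ⊆ H ∧ G.IsClique (f i)) ∧ ∀ e ∈ F, ∃ i, ∀ x ∈ e, x ∈ f i}

/-- The edge clique cover number `θ_E(G)`. -/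
noncomputable def thetaE {V : Type*} (G : SimpleGraph V) : ℕ :=
  thetaEOn G G.edgeSet Set.univ

/-- The vertex clique cover number of the subgraph of `G` induced on `S`: the minimum
number of cliques of `G` contained in `S` whose union covers `S`. -/
noncomputable def thetaVOn {V : Type*} (G : SimpleGraph V) (S : Set V) : ℕ :=
  sInf {n | ∃ f : Fin n → Set V,
    (∀ i, f i ⊆ S ∧ G.IsClique (f i)) ∧ ∀ v ∈ S, ∃ i, v ∈ f i}

/-- The closed neighborhood `N_G[U]` of a vertex subset. -/
def closedNbhd {V : Type*} (G : SimpleGraph V) (U : Set V) : Set V :=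
  U ∪ {v | ∃ u ∈ U, G.Adj u v}

/-- The set `E_G[U]` of edges of `G` with at least one endpoint in `U`. -/
def incidentEdges {V : Type*} (G : SimpleGraph V) (U : Set V) : Set (Sym2 V) :=
  {e | e ∈ G.edgeSet ∧ ∃ x ∈ e, x ∈ U}

/-!
For the lower bound, take a witness digraph `D` for `k`. Acyclicity gives a vertex `v₁` with no
in-neighbour and a vertex `v₂` whose only possible in-neighbour is `v₁`. Every edge of `G` has a
common prey in `D`, which is neither `v₁` nor `v₂`. The in-neighbours of a vertex form a clique of
the competition graph, so in a triangle-free competition graph an edge is determined by its prey: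
`|E| ≤ |V| + k - 2`.

For the upper bound, enumerate the vertices `v₀, …, v_{n-1}` by distance from `v₀`, so that each
`vᵢ` with `i ≥ 1` has an earlier neighbour `v_{p(i)}`. The tree edge `v_{p(i)} vᵢ` preys on
`v_{i+1}` for `1 ≤ i ≤ n - 2`, and each of the remaining `|E| - (n - 2)` edges preys on a new
isolated vertex. Indices increase along every arc, so the digraph is acyclic.
-/

open Function Relation

namespace SimpleGraph

variable {V : Type*} {G : SimpleGraph V}

theorem CliqueFree.edge_eq_of_isClique (htri : G.CliqueFree 3) {s : Set V} (hs : G.IsClique s)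
    {e₁ e₂ : Sym2 V} (he₁ : e₁ ∈ G.edgeSet) (he₂ : e₂ ∈ G.edgeSet) (h₁ : ∀ x ∈ e₁, x ∈ s)
    (h₂ : ∀ x ∈ e₂, x ∈ s) : e₁ = e₂ := by
  classical
  induction e₁ using Sym2.ind with | _ a b => ?_
  induction e₂ using Sym2.ind with | _ c d => ?_
  have ha := h₁ a (Sym2.mem_mk_left a b)
  have hb := h₁ b (Sym2.mem_mk_right a b)
  have hs_sub : ∀ x ∈ s, x ∈ s(a, b) := by
    intro x hx
    by_contra hx'
    obtain ⟨hxa, hxb⟩ : x ≠ a ∧ x ≠ b := by simpa using hx'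
    exact htri {a, b, x} (is3Clique_triple_iff.2
      ⟨he₁, hs ha hx hxa.symm, hs hb hx hxb.symm⟩)
  exact Sym2.eq_of_ne_mem (G.ne_of_adj he₂)
    (hs_sub c (h₂ c (Sym2.mem_mk_left c d))) (hs_sub d (h₂ d (Sym2.mem_mk_right c d)))
    (Sym2.mem_mk_left c d) (Sym2.mem_mk_right c d)

theorem Connected.exists_adj_dist_lt (hG : G.Connected) {v r : V} (hv : v ≠ r) :
    ∃ u, G.Adj u v ∧ G.dist u r < G.dist v r := by
  obtain ⟨p, hp⟩ := hG.exists_walk_length_eq_dist v r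
  cases p with
  | nil => exact absurd rfl hv
  | cons h q =>
    refine ⟨_, h.symm, ?_⟩
    have := G.dist_le q
    rw [Walk.length_cons] at hp
    omega

theorem Connected.exists_equiv_fin_exists_adj_lt {n : ℕ} (hG : G.Connected)
    (e₀ : Fin (n + 1) ≃ V) : ∃ e : Fin (n + 1) ≃ V, ∀ i ≠ 0, ∃ j < i, G.Adj (e j) (e i) := by
  let d i := G.dist (e₀ i) (e₀ 0)
  let e := (Tuple.sort d).trans e₀
  have hmono : Monotone fun i => G.dist (e i) (e₀ 0) := Tuple.monotone_sort d
  have he0 : e 0 = e₀ 0 := by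
    have := hmono (Fin.zero_le (e.symm (e₀ 0)))
    simp only [Equiv.apply_symm_apply, dist_self, nonpos_iff_eq_zero] at this
    exact hG.dist_eq_zero_iff.1 this
  refine ⟨e, fun i hi => ?_⟩
  obtain ⟨u, hu, hlt⟩ := hG.exists_adj_dist_lt (he0 ▸ e.injective.ne hi)
  exact ⟨e.symm u, hmono.reflect_lt (by simpa using hlt), by simpa using hu⟩

end SimpleGraph

section Competition

variable {W : Type*} {D : W → W → Prop}

theorem DigraphAcyclic.of_rank (ρ : W → ℕ) (h : ∀ x y, D x y → ρ x < ρ y) :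
    DigraphAcyclic D := fun v hv => by
  have := hv.lift ρ h
  rw [transGen_eq_self] at this
  exact lt_irrefl _ this

theorem DigraphAcyclic.exists_source_pair [Finite W] [Nontrivial W] (hD : DigraphAcyclic D) :
    ∃ v₁ v₂, v₁ ≠ v₂ ∧ (∀ u, ¬ D u v₁) ∧ ∀ u, D u v₂ → u = v₁ := by
  have : IsTrans W (TransGen D) := ⟨fun _ _ _ => TransGen.trans⟩
  have : Std.Irrefl (TransGen D) := ⟨hD⟩
  have hwf := Finite.wellFounded_of_trans_of_irrefl (TransGen D)
  obtain ⟨v₁, -, hv₁⟩ := hwf.has_min Set.univ Set.univ_nonempty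
  obtain ⟨v₂, hne, hv₂⟩ := hwf.has_min {v₁}ᶜ (exists_ne v₁)
  exact ⟨v₁, v₂, Ne.symm hne, fun u hu => hv₁ u trivial (.single hu),
    fun u hu => by_contra fun h => hv₂ u h (.single hu)⟩

theorem isClique_competitionGraph_setOf (q : W) : (CompetitionGraph D).IsClique {x | D x q} :=
  fun _ hx _ hy hxy => ⟨hxy, q, hx, hy⟩

theorem ncard_edgeSet_competitionGraph_add_two_le [Finite W] [Nontrivial W]
    (hD : DigraphAcyclic D) (htri : (CompetitionGraph D).CliqueFree 3) :
    (CompetitionGraph D).edgeSet.ncard + 2 ≤ Nat.card W := by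
  classical
  have := Fintype.ofFinite W
  obtain ⟨v₁, v₂, hne, hv₁, hv₂⟩ := hD.exists_source_pair
  have hprey : ∀ e ∈ (CompetitionGraph D).edgeSet.toFinset,
      ∃ q ∈ ({v₁, v₂} : Finset W)ᶜ, ∀ x ∈ e, D x q := by
    rintro ⟨x, y⟩ he
    obtain ⟨hxy, q, hx, hy⟩ : (CompetitionGraph D).Adj x y := by simpa using he
    refine ⟨q, ?_, by simp [hx, hy]⟩
    simp only [Finset.mem_compl, Finset.mem_insert, Finset.mem_singleton, not_or]
    refine ⟨fun h => hv₁ x (h ▸ hx), fun h => hxy ?_⟩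
    rw [hv₂ x (h ▸ hx), hv₂ y (h ▸ hy)]
  calc (CompetitionGraph D).edgeSet.ncard + 2
      ≤ (({v₁, v₂} : Finset W)ᶜ).card + 2 := by
        rw [Set.ncard_eq_toFinset_card']
        gcongr
        refine Finset.card_le_card_of_forall_subsingleton _ hprey ?_
        rintro q - e₁ ⟨he₁, h₁⟩ e₂ ⟨he₂, h₂⟩
        exact htri.edge_eq_of_isClique (isClique_competitionGraph_setOf q)
          (by simpa using he₁) (by simpa using he₂) h₁ h₂
    _ = Nat.card W := by
        rw [Finset.card_compl, Finset.card_pair hne, Nat.card_eq_fintype_card]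
        have := Fintype.one_lt_card (α := W)
        omega

end Competition

section Witness

variable {V : Type*} {G : SimpleGraph V} {k : ℕ}

theorem addIsolated_eq_map (G : SimpleGraph V) (k : ℕ) :
    addIsolated G k = G.map Embedding.inl := by
  ext a b
  simp only [addIsolated, map_adj, Embedding.inl_apply]
  constructor
  · rintro ⟨x, y, rfl, rfl, h⟩
    exact ⟨x, y, h, rfl, rfl⟩
  · rintro ⟨x, y, h, rfl, rfl⟩
    exact ⟨x, y, rfl, rfl, h⟩

theorem IsCompetitionWitness.ncard_edgeSet_add_two_le [Finite V] [Nontrivial V]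
    (hG : IsCompetitionWitness G k) (htri : G.CliqueFree 3) :
    G.edgeSet.ncard + 2 ≤ Nat.card V + k := by
  obtain ⟨D, hD, hDG⟩ := hG
  have : Nontrivial (V ⊕ Fin k) := Sum.inl_injective.nontrivial
  rw [addIsolated_eq_map] at hDG
  have := ncard_edgeSet_competitionGraph_add_two_le hD (hDG ▸ cliqueFree_map_iff.2 htri)
  rwa [hDG, edgeSet_map, Set.ncard_image_of_injective _ Embedding.inl.sym2Map.injective,
    Nat.card_sum, Nat.card_eq_fintype_card (α := Fin k), Fintype.card_fin] at this

theorem isCompetitionWitness_of_cover {ι : Type*} (f : ι → Sym2 V) (hf : ∀ i, f i ∈ G.edgeSet)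
    (hcover : G.edgeSet ⊆ Set.range f) (p : ι → V ⊕ Fin k) (hp : Injective p)
    (ρ : V ⊕ Fin k → ℕ) (hρ : ∀ i, ∀ a ∈ f i, ρ (.inl a) < ρ (p i)) :
    IsCompetitionWitness G k := by
  refine ⟨fun x y => ∃ i, p i = y ∧ ∃ a ∈ f i, x = .inl a, .of_rank ρ ?_, ?_⟩
  · rintro _ _ ⟨i, rfl, a, ha, rfl⟩
    exact hρ i a ha
  ext x y
  constructor
  · rintro ⟨hxy, q, ⟨i, hi, a, ha, rfl⟩, ⟨j, hj, b, hb, rfl⟩⟩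
    obtain rfl := hp (hi.trans hj.symm)
    have hab : a ≠ b := fun h => hxy (h ▸ rfl)
    have := hf i
    rw [(Sym2.mem_and_mem_iff hab).1 ⟨ha, hb⟩] at this
    exact ⟨a, b, rfl, rfl, this⟩
  · rintro ⟨a, b, rfl, rfl, hab⟩
    obtain ⟨i, hi⟩ := hcover (G.mem_edgeSet.2 hab)
    exact ⟨by simpa using hab.ne, p i, ⟨i, rfl, a, hi ▸ Sym2.mem_mk_left a b, rfl⟩,
      ⟨i, rfl, b, hi ▸ Sym2.mem_mk_right a b, rfl⟩⟩

theorem isCompetitionWitness_of_equiv_fin {m : ℕ} (e : Fin (m + 2) ≃ V)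
    (he : ∀ i ≠ 0, ∃ j < i, G.Adj (e j) (e i)) :
    IsCompetitionWitness G (G.edgeSet.ncard - m) := by
  have := Finite.of_equiv _ e
  choose par hpar hadj using fun i : Fin m => he i.succ.castSucc (by simp)
  let t i := s(e (par i), e i.succ.castSucc)
  have ht : Injective t := by
    intro i j hij
    rcases Sym2.eq_iff.1 hij with ⟨-, h⟩ | ⟨h₁, h₂⟩
    · simpa using e.injective h
    · have := hpar i
      rw [e.injective h₁, e.injective h₂] at this
      exact (lt_asymm this (hpar j)).elim
  let R := G.edgeSet \ Set.range t
  have hR : Nat.card R = G.edgeSet.ncard - m := by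
    rw [Nat.card_coe_set_eq, Set.ncard_sdiff (by rintro _ ⟨i, rfl⟩; exact hadj i),
      Set.ncard_range_of_injective ht, Nat.card_fin]
  let γ : R ≃ Fin _ := (Finite.equivFin R).trans (finCongr hR)
  refine isCompetitionWitness_of_cover (Sum.elim t Subtype.val) ?_ ?_
    (Sum.elim (fun i => .inl (e i.succ.succ)) (fun r => .inr (γ r))) ?_
    (Sum.elim (fun v => e.symm v) fun _ => m + 2) ?_
  · rintro (i | ⟨r, hr⟩)
    exacts [hadj i, hr.1]
  · intro x hx
    by_cases hxt : x ∈ Set.range t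
    · obtain ⟨i, rfl⟩ := hxt
      exact ⟨.inl i, rfl⟩
    · exact ⟨.inr ⟨x, hx, hxt⟩, rfl⟩
  · refine Injective.sumElim (fun i j h => ?_) (fun r r' h => γ.injective (Sum.inr_injective h))
      fun _ _ => Sum.inl_ne_inr
    simpa using h
  · rintro (i | r) a ha
    · have := hpar i
      simp only [t, Sum.elim_inl, Sym2.mem_iff] at ha ⊢
      rcases ha with rfl | rfl
      · simp only [Equiv.symm_apply_apply, Fin.lt_def, Fin.val_succ, Fin.val_castSucc] at this ⊢
        omega
      · simp
    · exact (e.symm a).isLt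

end Witness

theorem triangle_free_competition_number {V : Type*} [Fintype V]
    (G : SimpleGraph V) (hconn : G.Connected) (htri : G.CliqueFree 3)
    (hcard : 1 < Fintype.card V) :
    (compNum G : ℤ) = (G.edgeSet.ncard : ℤ) - (Fintype.card V : ℤ) + 2 := by
  have : Nontrivial V := Fintype.one_lt_card_iff_nontrivial.1 hcard
  obtain ⟨m, hm⟩ : ∃ m, Fintype.card V = m + 2 := ⟨_, (Nat.sub_add_cancel hcard).symm⟩
  obtain ⟨e, he⟩ := hconn.exists_equiv_fin_exists_adj_lt (Fintype.equivFinOfCardEq hm).symm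
  have hwit := isCompetitionWitness_of_equiv_fin e he
  have hcomp : compNum G = G.edgeSet.ncard - m := by
    refine le_antisymm (Nat.sInf_le hwit) (le_csInf ⟨_, hwit⟩ fun k hk => ?_)
    have := hk.ncard_edgeSet_add_two_le htri
    rw [Nat.card_eq_fintype_card, hm] at this
    omega
  have hedges := hconn.card_vert_le_card_edgeSet_add_one
  rw [Nat.card_eq_fintype_card, hm, Nat.card_coe_set_eq] at hedges
  rw [hcomp, hm]
  omega
end

section
/- The competition number of the octahedron graph (isomorphic to K_{2,2,2}) equals 2. -/
open SimpleGraph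

/-!
Lower bound: among the vertices of `G`, an acyclic digraph has a vertex `v` with no prey inside
`G`, so all prey of `v` are added isolated vertices. With at most one of those, all neighbours
of `v` share that prey and `N(v)` is a clique; but in the octahedron `N(v)` is a 4-cycle.

Upper bound: the four faces `{(0, a), (1, b), (2, c)}` with `a + b + c` even cover every edge
exactly once. Two of them can prey on octahedron vertices later in a suitable vertex order,
the other two on the two added vertices.
-/

theorem addIsolated_adj_inl {V : Type*} {G : SimpleGraph V} {k : ℕ} {x y : V} :
    (addIsolated G k).Adj (Sum.inl x) (Sum.inl y) ↔ G.Adj x y := by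
  simp [addIsolated]

theorem DigraphAcyclic.exists_forall_not_rel {W : Type*} [Finite W] {D : W → W → Prop}
    (hD : DigraphAcyclic D) {S : Set W} (hS : S.Nonempty) : ∃ m ∈ S, ∀ y ∈ S, ¬ D m y := by
  have : Std.Irrefl (flip (Relation.TransGen D)) := ⟨hD⟩
  have : IsTrans W (flip (Relation.TransGen D)) := ⟨fun _ _ _ h₁ h₂ => h₂.trans h₁⟩
  obtain ⟨m, hmS, hm⟩ :=
    (Finite.wellFounded_of_trans_of_irrefl (flip (Relation.TransGen D))).has_min S hS
  exact ⟨m, hmS, fun y hy hmy => hm y hy (.single hmy)⟩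

theorem DigraphAcyclic.of_rank_lt {W : Type*} {D : W → W → Prop} (rank : W → ℕ)
    (hrank : ∀ x y, D x y → rank x < rank y) : DigraphAcyclic D := by
  have hlt : ∀ x y, Relation.TransGen D x y → rank x < rank y := fun x y h => by
    induction h with
    | single h => exact hrank _ _ h
    | tail _ h ih => exact ih.trans (hrank _ _ h)
  exact fun v hv => (hlt v v hv).false

theorem isCompetitionWitness_of_cliqueCover {V ι : Type*} {G : SimpleGraph V} {k : ℕ}
    (C : ι → Set V) (hclique : ∀ i, G.IsClique (C i))
    (hcover : ∀ x y, G.Adj x y → ∃ i, x ∈ C i ∧ y ∈ C i)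
    (prey : ι → V ⊕ Fin k) (hprey : Function.Injective prey) (rank : V ⊕ Fin k → ℕ)
    (hrank : ∀ i, ∀ x ∈ C i, rank (Sum.inl x) < rank (prey i)) :
    IsCompetitionWitness G k := by
  refine ⟨fun a b => ∃ x i, a = Sum.inl x ∧ x ∈ C i ∧ b = prey i,
    .of_rank_lt rank ?_, ?_⟩
  · rintro _ _ ⟨x, i, rfl, hx, rfl⟩
    exact hrank i x hx
  ext a b
  constructor
  · rintro ⟨hab, _, ⟨x, i, rfl, hx, rfl⟩, ⟨y, j, rfl, hy, hij⟩⟩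
    obtain rfl := hprey hij
    exact addIsolated_adj_inl.2 (hclique i hx hy fun h => hab (congrArg _ h))
  · rintro ⟨x, y, rfl, rfl, hxy⟩
    obtain ⟨i, hx, hy⟩ := hcover x y hxy
    exact ⟨fun h => hxy.ne (Sum.inl_injective h), prey i, ⟨x, i, rfl, hx, rfl⟩,
      ⟨y, i, rfl, hy, rfl⟩⟩

theorem IsCompetitionWitness.exists_isClique_neighborSet {V : Type*} [Finite V] [Nonempty V]
    {G : SimpleGraph V} {k : ℕ} (h : IsCompetitionWitness G k) (hk : k ≤ 1) :
    ∃ v, G.IsClique (G.neighborSet v) := by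
  obtain ⟨D, hD, hDG⟩ := h
  obtain ⟨_, ⟨v, rfl⟩, hv⟩ :=
    hD.exists_forall_not_rel (Set.range_nonempty (Sum.inl : V → V ⊕ Fin k))
  have hprey : ∀ x, G.Adj v x → ∃ j, D (Sum.inl v) (Sum.inr j) ∧ D (Sum.inl x) (Sum.inr j) := by
    intro x hvx
    obtain ⟨-, p, hvp, hxp⟩ := hDG ▸ addIsolated_adj_inl.2 hvx
    rcases p with y | j
    · exact (hv _ ⟨y, rfl⟩ hvp).elim
    · exact ⟨j, hvp, hxp⟩
  have : Subsingleton (Fin k) := Fin.subsingleton_iff_le_one.2 hk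
  refine ⟨v, fun x hx y hy hxy => ?_⟩
  obtain ⟨j, -, hxj⟩ := hprey x hx
  obtain ⟨j', -, hyj⟩ := hprey y hy
  rw [Subsingleton.elim j' j] at hyj
  rw [← addIsolated_adj_inl (k := k), ← hDG]
  exact ⟨fun h => hxy (Sum.inl_injective h), _, hxj, hyj⟩

theorem completeMultipartiteGraph.not_isClique_neighborSet {ι : Type*} [Nontrivial ι]
    {V : ι → Type*} [∀ i, Nontrivial (V i)] (v : Σ i, V i) :
    ¬ (completeMultipartiteGraph V).IsClique ((completeMultipartiteGraph V).neighborSet v) := by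
  obtain ⟨j, hj⟩ := exists_ne v.1
  obtain ⟨a, b, hab⟩ := exists_pair_ne (V j)
  exact fun h => h (x := ⟨j, a⟩) (y := ⟨j, b⟩) hj.symm hj.symm (by simpa using hab) rfl

theorem completeMultipartiteGraph.isClique_range {ι : Type*} {V : ι → Type*} (f : ∀ i, V i) :
    (completeMultipartiteGraph V).IsClique (Set.range fun i => (⟨i, f i⟩ : Σ i, V i)) := by
  rintro _ ⟨i, rfl⟩ _ ⟨j, rfl⟩ hij
  exact fun h : i = j => hij (h ▸ rfl)

theorem two_le_of_isCompetitionWitness {ι : Type*} [Finite ι] [Nontrivial ι] {V : ι → Type*}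
    [∀ i, Finite (V i)] [∀ i, Nontrivial (V i)] {k : ℕ}
    (h : IsCompetitionWitness (completeMultipartiteGraph V) k) : 2 ≤ k := by
  by_contra! hk
  obtain ⟨i, -⟩ := exists_pair_ne ι
  have : Nonempty (Σ i, V i) := ⟨⟨i, Classical.arbitrary _⟩⟩
  obtain ⟨v, hv⟩ := h.exists_isClique_neighborSet (by omega)
  exact completeMultipartiteGraph.not_isClique_neighborSet v hv

def octahedronTriangle (p : Fin 2 × Fin 2) : Fin 3 → Fin 2 :=
  ![p.1, p.2, p.1 + p.2]

theorem exists_octahedronTriangle_eq_eq :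
    ∀ i j : Fin 3, i ≠ j → ∀ s t : Fin 2,
      ∃ p, octahedronTriangle p i = s ∧ octahedronTriangle p j = t := by
  decide

def octahedronPrey (p : Fin 2 × Fin 2) : (Σ _ : Fin 3, Fin 2) ⊕ Fin 2 :=
  ![![.inl ⟨0, 1⟩, .inr 0], ![.inr 1, .inl ⟨2, 1⟩]] p.1 p.2

def octahedronRank : (Σ _ : Fin 3, Fin 2) ⊕ Fin 2 → ℕ :=
  Sum.elim (fun x => 3 * x.2 + x.1) (fun j => 6 + j)

theorem isCompetitionWitness_octahedron_two :
    IsCompetitionWitness (completeMultipartiteGraph fun _ : Fin 3 => Fin 2) 2 := by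
  refine isCompetitionWitness_of_cliqueCover
    (fun p => Set.range fun i => ⟨i, octahedronTriangle p i⟩)
    (fun p => completeMultipartiteGraph.isClique_range _) ?_
    octahedronPrey (by decide) octahedronRank ?_
  · rintro ⟨i, s⟩ ⟨j, t⟩ hij
    obtain ⟨p, rfl, rfl⟩ := exists_octahedronTriangle_eq_eq i j (by simpa using hij) s t
    exact ⟨p, ⟨i, rfl⟩, ⟨j, rfl⟩⟩
  · rintro p _ ⟨i, rfl⟩
    revert p i
    decide

theorem competition_number_octahedron :
    compNum (SimpleGraph.completeMultipartiteGraph (fun _ : Fin 3 => Fin 2)) = 2 := by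
  have h₂ := isCompetitionWitness_octahedron_two
  exact le_antisymm (Nat.sInf_le h₂) (le_csInf ⟨2, h₂⟩ fun _ => two_le_of_isCompetitionWitness)
end
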